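/- There is a (unique) ring endomorphism φ of S with φ(q) = q^p, φ(T_i) = T_i^p for all i, and φ(ε_i) = T_i^{p−1}·[p]_q·ε_i for all i; and φ is a Frobenius lift: φ(x) − x^p ∈ p·S for every x ∈ S. (This is the δ-ring structure on S = R̃ ⊕ ε·Ω extending that on the chart, with φ(ε·dT_i) = T_i^{p−1}·((q^p−1)/(q−1))·ε·dT_i.) -/

import Mathlib

/-!
`S` is presented by generators and relations, so `φ` exists once the prescribed images satisfy
the relations (for `ε_i² = (q-1)T_iε_i` this is `(q-1)[p]_q = q^p - 1`), and it is unique because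
`q, T_i, ε_i` generate `S`. For the Frobenius-lift property, compare the two ring homs
`x ↦ φ(x) mod p` and `x ↦ x^p mod p` on generators: they agree on `q` and `T_i`, and on `ε_i`,
where `ε_i^p = ((q-1)T_i)^(p-1) ε_i`, agreement is the congruence `(q-1)^(p-1) ≡ [p]_q mod p`,
which holds in `𝔽_p[q]` because there `(q-1)·(q-1)^(p-1) = q^p - 1 = (q-1)·[p]_q`.
-/

open Finset

/-- The q-analogue `[n]_t = ∑_{i=0}^{n-1} t^i`. -/
def qan {A : Type*} [CommRing A] (t : A) (n : ℕ) : A := ∑ i ∈ Finset.range n, t ^ i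

/-- `B := ℤ[q][T_1,…,T_m]`. -/
abbrev Bpoly (m : ℕ) := MvPolynomial (Fin m) (Polynomial ℤ)

/-- The polynomial ring `B[ε_1,…,ε_m]`. -/
abbrev Epoly (m : ℕ) := MvPolynomial (Fin m) (Bpoly m)

set_option synthInstance.maxHeartbeats 1000000 in
noncomputable instance epolyCommRing (m : ℕ) : CommRing (Epoly m) := inferInstance

/-- `q ∈ B`. -/
noncomputable def qB (m : ℕ) : Bpoly m := MvPolynomial.C Polynomial.X

/-- The relations `ε_i² = (q−1)·T_i·ε_i` and `ε_i·ε_j = 0` for `i ≠ j`. -/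
noncomputable def relSet (m : ℕ) : Set (Epoly m) :=
  (Set.range fun i : Fin m =>
      (MvPolynomial.X i : Epoly m) ^ 2 -
        MvPolynomial.C ((qB m - 1) * MvPolynomial.X i) * MvPolynomial.X i) ∪
    {x : Epoly m | ∃ i j : Fin m, i ≠ j ∧ x = MvPolynomial.X i * MvPolynomial.X j}

/-- `S := B[ε_1,…,ε_m]/(ε_i² − (q−1)·T_i·ε_i, ε_i·ε_j (i ≠ j))`,
a free `B`-module with basis `1, ε_1, …, ε_m`. -/
abbrev Sring (m : ℕ) := Epoly m ⧸ Ideal.span (relSet m)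

/-- The image of `q` in `S`. -/
noncomputable def qS (m : ℕ) : Sring m :=
  Ideal.Quotient.mk _ (MvPolynomial.C (qB m))

/-- The image of `T_i` in `S`. -/
noncomputable def TS (m : ℕ) (i : Fin m) : Sring m :=
  Ideal.Quotient.mk _ (MvPolynomial.C (MvPolynomial.X i : Bpoly m))

/-- The element `ε_i ∈ S`. -/
noncomputable def epsS (m : ℕ) (i : Fin m) : Sring m :=
  Ideal.Quotient.mk _ (MvPolynomial.X i : Epoly m)

lemma sub_one_mul_qan {A : Type*} [CommRing A] (t : A) (n : ℕ) :
    (t - 1) * qan t n = t ^ n - 1 := by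
  rw [qan, mul_comm, geom_sum_mul]

lemma map_qan {A B F : Type*} [CommRing A] [CommRing B] [FunLike F A B] [RingHomClass F A B]
    (f : F) (t : A) (n : ℕ) : f (qan t n) = qan (f t) n := by
  simp [qan, map_sum]

lemma sub_one_pow_pred_eq_qan {R : Type*} [CommRing R] [IsDomain R] {p : ℕ} [Fact p.Prime]
    [CharP R p] {t : R} (ht : t ≠ 1) : (t - 1) ^ (p - 1) = qan t p := by
  refine mul_left_cancel₀ (sub_ne_zero.2 ht) ?_
  rw [← pow_succ', Nat.sub_add_cancel (Fact.out : p.Prime).pos, sub_pow_char, one_pow,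
    sub_one_mul_qan]

/-- The universal case `t = X ∈ ℤ[X]` follows from `sub_one_pow_pred_eq_qan` in `𝔽_p[X]`,
since the kernel of `ℤ[X] → 𝔽_p[X]` is generated by `p`. -/
lemma natCast_dvd_sub_one_pow_pred_sub_qan {A : Type*} [CommRing A] {p : ℕ} (hp : p.Prime)
    (t : A) : (p : A) ∣ (t - 1) ^ (p - 1) - qan t p := by
  have : Fact p.Prime := ⟨hp⟩
  have hX : (Polynomial.X : Polynomial (ZMod p)) ≠ 1 :=
    sub_ne_zero.1 (by simpa using Polynomial.X_sub_C_ne_zero (1 : ZMod p))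
  have hmem : (Polynomial.X - 1 : Polynomial ℤ) ^ (p - 1) - qan Polynomial.X p ∈
      RingHom.ker (Polynomial.mapRingHom (Int.castRingHom (ZMod p))) := by
    rw [RingHom.mem_ker, map_sub, map_pow, map_sub, map_qan]
    simp [sub_one_pow_pred_eq_qan hX]
  rw [Polynomial.ker_mapRingHom, ZMod.ker_intCastRingHom, Ideal.map_span, Set.image_singleton,
    Ideal.mem_span_singleton] at hmem
  simpa [map_qan] using map_dvd (Polynomial.aeval t) hmem

lemma pow_eq_pow_pred_mul_of_sq_eq_mul {M : Type*} [CommMonoid M] {e c : M} (h : e ^ 2 = c * e)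
    {n : ℕ} (hn : n ≠ 0) : e ^ n = c ^ (n - 1) * e := by
  induction n with
  | zero => exact absurd rfl hn
  | succ k ih =>
    rcases Nat.eq_zero_or_pos k with rfl | hk
    · simp
    · rw [pow_succ, ih hk.ne', mul_assoc, ← sq, h, ← mul_assoc, ← pow_succ,
        Nat.sub_add_cancel hk, Nat.add_sub_cancel]

noncomputable def frobeniusModPrime (R : Type*) [CommRing R] {p : ℕ} (hp : p.Prime) :
    R →+* R ⧸ Ideal.span {(p : R)} where
  toFun x := Ideal.Quotient.mk _ (x ^ p)
  map_one' := by simp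
  map_mul' x y := by simp [mul_pow]
  map_zero' := by simp [zero_pow hp.ne_zero]
  map_add' x y := by
    have hp0 : Ideal.Quotient.mk (Ideal.span {(p : R)}) (p : R) = 0 :=
      Ideal.Quotient.eq_zero_iff_mem.2 (Ideal.mem_span_singleton_self _)
    simp [add_pow_prime_eq hp x y, hp0]

lemma frobeniusModPrime_apply {R : Type*} [CommRing R] {p : ℕ} (hp : p.Prime) (x : R) :
    frobeniusModPrime R hp x = Ideal.Quotient.mk _ (x ^ p) := rfl

namespace Sring

variable {m : ℕ}

lemma epsS_sq (i : Fin m) : epsS m i ^ 2 = (qS m - 1) * TS m i * epsS m i := by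
  have h : (MvPolynomial.X i : Epoly m) ^ 2 -
      MvPolynomial.C ((qB m - 1) * MvPolynomial.X i) * MvPolynomial.X i ∈ Ideal.span (relSet m) :=
    Ideal.subset_span (Or.inl ⟨i, rfl⟩)
  rw [← Ideal.Quotient.eq_zero_iff_mem] at h
  simpa [sub_eq_zero, epsS, qS, TS] using h

lemma epsS_mul_epsS {i j : Fin m} (h : i ≠ j) : epsS m i * epsS m j = 0 :=
  Ideal.Quotient.eq_zero_iff_mem.2 (Ideal.subset_span (Or.inr ⟨i, j, h, rfl⟩))

lemma epsS_pow {n : ℕ} (hn : n ≠ 0) (i : Fin m) :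
    epsS m i ^ n = ((qS m - 1) * TS m i) ^ (n - 1) * epsS m i :=
  pow_eq_pow_pred_mul_of_sq_eq_mul (by rw [epsS_sq, mul_assoc]) hn

variable {R : Type*} [CommRing R]

theorem hom_ext {f g : Sring m →+* R} (hq : f (qS m) = g (qS m))
    (hT : ∀ i, f (TS m i) = g (TS m i)) (he : ∀ i, f (epsS m i) = g (epsS m i)) : f = g :=
  Ideal.Quotient.ringHom_ext <| MvPolynomial.ringHom_ext'
    (MvPolynomial.ringHom_ext' (Polynomial.ringHom_ext' (RingHom.ext_int _ _) hq) hT) he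

noncomputable def lift (q : R) (T e : Fin m → R) (hsq : ∀ i, e i ^ 2 = (q - 1) * T i * e i)
    (hmul : ∀ i j, i ≠ j → e i * e j = 0) : Sring m →+* R :=
  Ideal.Quotient.lift _ (MvPolynomial.eval₂Hom
      (MvPolynomial.eval₂Hom (Polynomial.eval₂RingHom (Int.castRingHom R) q) T) e) <| by
    intro a ha
    refine (Ideal.span_le (I := RingHom.ker _)).2 ?_ ha
    rintro x (⟨i, rfl⟩ | ⟨i, j, hij, rfl⟩)
    · simp [qB, hsq, mul_assoc]
    · simp [hmul i j hij]

section lift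

variable (q : R) (T e : Fin m → R) (hsq : ∀ i, e i ^ 2 = (q - 1) * T i * e i)
  (hmul : ∀ i j, i ≠ j → e i * e j = 0)

@[simp] lemma lift_qS : lift q T e hsq hmul (qS m) = q :=
  (Ideal.Quotient.lift_mk _ _ _).trans (by simp [qB])

@[simp] lemma lift_TS (i : Fin m) : lift q T e hsq hmul (TS m i) = T i :=
  (Ideal.Quotient.lift_mk _ _ _).trans (by simp)

@[simp] lemma lift_epsS (i : Fin m) : lift q T e hsq hmul (epsS m i) = e i :=
  (Ideal.Quotient.lift_mk _ _ _).trans (by simp)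

end lift

lemma sq_frobeniusLift_epsS (p : ℕ) (i : Fin m) :
    (TS m i ^ (p - 1) * qan (qS m) p * epsS m i) ^ 2 =
      (qS m ^ p - 1) * TS m i ^ p * (TS m i ^ (p - 1) * qan (qS m) p * epsS m i) := by
  rcases p with _ | k
  · simp [qan]
  · rw [mul_pow, epsS_sq, ← sub_one_mul_qan, Nat.add_sub_cancel]
    ring

noncomputable def frobeniusLift (m p : ℕ) : Sring m →+* Sring m :=
  lift (qS m ^ p) (fun i => TS m i ^ p) (fun i => TS m i ^ (p - 1) * qan (qS m) p * epsS m i)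
    (sq_frobeniusLift_epsS p) fun i j hij => by
      rw [mul_mul_mul_comm, epsS_mul_epsS hij, mul_zero]

theorem sub_pow_mem_span_of_apply_eq {p : ℕ} (hp : p.Prime) {φ : Sring m →+* Sring m}
    (hq : φ (qS m) = qS m ^ p) (hT : ∀ i, φ (TS m i) = TS m i ^ p)
    (he : ∀ i, φ (epsS m i) = TS m i ^ (p - 1) * qan (qS m) p * epsS m i) (x : Sring m) :
    φ x - x ^ p ∈ Ideal.span {(p : Sring m)} := by
  have hφ : (Ideal.Quotient.mk _).comp φ = frobeniusModPrime (Sring m) hp := by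
    refine hom_ext ?_ (fun i => ?_) (fun i => ?_) <;>
      rw [RingHom.comp_apply, frobeniusModPrime_apply, Ideal.Quotient.eq]
    · simp [hq]
    · simp [hT]
    · rw [he, epsS_pow hp.ne_zero, Ideal.mem_span_singleton]
      have hdvd := (natCast_dvd_sub_one_pow_pred_sub_qan hp (qS m)).mul_left
        (TS m i ^ (p - 1) * epsS m i)
      rw [← dvd_neg]
      convert hdvd using 1
      rw [mul_pow]
      ring
  rw [← Ideal.Quotient.eq, ← frobeniusModPrime_apply hp, ← hφ, RingHom.comp_apply]

end Sring

theorem stmt18_general (p : ℕ) (hp : p.Prime) (m : ℕ) :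
    (∃! φ : Sring m →+* Sring m,
      φ (qS m) = qS m ^ p ∧
      (∀ i : Fin m, φ (TS m i) = TS m i ^ p) ∧
      (∀ i : Fin m, φ (epsS m i) = TS m i ^ (p - 1) * qan (qS m) p * epsS m i)) ∧
    (∀ φ : Sring m →+* Sring m,
      (φ (qS m) = qS m ^ p ∧
        (∀ i : Fin m, φ (TS m i) = TS m i ^ p) ∧
        (∀ i : Fin m, φ (epsS m i) = TS m i ^ (p - 1) * qan (qS m) p * epsS m i)) →
      ∀ x : Sring m, φ x - x ^ p ∈ Ideal.span {(p : Sring m)}) := by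
  refine ⟨⟨Sring.frobeniusLift m p, ?_, ?_⟩, fun φ ⟨hq, hT, he⟩ => ?_⟩
  · simp [Sring.frobeniusLift]
  · rintro φ ⟨hq, hT, he⟩
    exact Sring.hom_ext (by simp [hq, Sring.frobeniusLift]) (by simp [hT, Sring.frobeniusLift])
      (by simp [he, Sring.frobeniusLift])
  · exact Sring.sub_pow_mem_span_of_apply_eq hp hq hT he

/-- There is a unique ring endomorphism `φ` of `S` with `φ(q) = q^p`,
`φ(T_i) = T_i^p` and `φ(ε_i) = T_i^{p−1}·[p]_q·ε_i` for all `i`; and any such `φ` is a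
Frobenius lift: `φ(x) − x^p ∈ p·S` for every `x ∈ S`. -/
theorem stmt18 (p : ℕ) (hp : p.Prime) (m : ℕ) (hm : 1 ≤ m) :
    (∃! φ : Sring m →+* Sring m,
      φ (qS m) = qS m ^ p ∧
      (∀ i : Fin m, φ (TS m i) = TS m i ^ p) ∧
      (∀ i : Fin m, φ (epsS m i) = TS m i ^ (p - 1) * qan (qS m) p * epsS m i)) ∧
    (∀ φ : Sring m →+* Sring m,
      (φ (qS m) = qS m ^ p ∧
        (∀ i : Fin m, φ (TS m i) = TS m i ^ p) ∧
        (∀ i : Fin m, φ (epsS m i) = TS m i ^ (p - 1) * qan (qS m) p * epsS m i)) →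
      ∀ x : Sring m, φ x - x ^ p ∈ Ideal.span {(p : Sring m)}) :=
  stmt18_general p hp m
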